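/- Let 0 < |α| ≤ 1/2 and fix x, y ∈ ℝ² \ {0} with |x| = r, |y| = r'. There exist constants C₁, C₂ > 0 (depending only on α) such that for all t > 0 with r r' ≤ t: | (1/(4π t)) ∑_{m∈ℤ} I_{|m+α|}(r r'/(2it)) e^{im(θ−θ')} | ≤ C₂ · t^{−1} · (r r'/t)^{|α|}. -/

import Mathlib

/-
Since `Γ(s) ≥ 1/2` for `s ≥ 1`, the power series gives `|I_ν(z)| ≤ (8/3) (|z|/2)^ν` for `ν ≥ 0`
and `|z| ≤ 1`. For `|α| ≤ 1/2` the orders `ν = |m + α|` satisfy `|α| ≤ ν` and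
`|m| ≤ ν - |α| + 1`, so with `q = |z|/2 ≤ 1/2` the `m`-th term of the series is at most
`(16/3) q^|α| 2^(-|m|)`. Summing over `m` and taking `|z| = r r' / (2t) ≤ 1/2` gives the bound.
-/

open Real

/-- The modified Bessel function of the first kind, defined by its power series. -/
noncomputable def besselI (ν : ℝ) (z : ℂ) : ℂ :=
  ∑' k : ℕ, (z / 2) ^ ((ν : ℂ) + 2 * k) /
    ((k.factorial : ℂ) * (Real.Gamma (ν + k + 1) : ℂ))

lemma Real.half_le_Gamma {s : ℝ} (hs : 1 ≤ s) : 1 / 2 ≤ Gamma s := by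
  have hmono := Gamma_strictMonoOn_Ici.monotoneOn
  rcases le_total 2 s with h2 | h2
  · calc 1 / 2 ≤ Gamma 2 := by rw [Gamma_two]; norm_num
      _ ≤ Gamma s := hmono (Set.mem_Ici.2 le_rfl) h2 h2
  · have hΓ : Gamma 2 ≤ Gamma (s + 1) :=
      hmono (Set.mem_Ici.2 le_rfl) (Set.mem_Ici.2 (by linarith)) (by linarith)
    rw [Gamma_add_one (by linarith), Gamma_two] at hΓ
    nlinarith [Gamma_pos_of_pos (by linarith : 0 < s)]

lemma norm_besselI_term_le {ν : ℝ} (hν : 0 ≤ ν) (z : ℂ) (k : ℕ) :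
    ‖(z / 2) ^ ((ν : ℂ) + 2 * k) / ((k.factorial : ℂ) * (Gamma (ν + k + 1) : ℂ))‖ ≤
      2 * (‖z‖ / 2) ^ ν * ((‖z‖ / 2) ^ 2) ^ k := by
  have hΓ : 1 / 2 ≤ Gamma (ν + k + 1) := Real.half_le_Gamma (by linarith [k.cast_nonneg (α := ℝ)])
  have hfac : (1 : ℝ) ≤ k.factorial := by exact_mod_cast k.factorial_pos
  have hnum : ‖(z / 2) ^ ((ν : ℂ) + 2 * k)‖ = (‖z‖ / 2) ^ ν * ((‖z‖ / 2) ^ 2) ^ k := by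
    rw [show (ν : ℂ) + 2 * k = ((ν + 2 * k : ℝ) : ℂ) by push_cast; ring, Complex.norm_cpow_real,
      rpow_add_of_nonneg (by positivity) hν (by positivity), norm_div, Complex.norm_two,
      show (2 * k : ℝ) = ((2 * k : ℕ) : ℝ) by push_cast; ring, rpow_natCast, pow_mul]
  rw [norm_div, hnum, norm_mul, Complex.norm_natCast, Complex.norm_real,
    norm_of_nonneg (by linarith), div_le_iff₀ (by nlinarith)]
  have : 0 ≤ (‖z‖ / 2) ^ ν * ((‖z‖ / 2) ^ 2) ^ k := by positivity
  nlinarith [mul_le_mul hfac hΓ (by norm_num) (by positivity)]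

lemma norm_besselI_le {ν : ℝ} (hν : 0 ≤ ν) {z : ℂ} (hz : ‖z‖ < 2) :
    ‖besselI ν z‖ ≤ 2 * (‖z‖ / 2) ^ ν / (1 - (‖z‖ / 2) ^ 2) := by
  have hq : (‖z‖ / 2) ^ 2 < 1 := by
    rw [sq_lt_one_iff_abs_lt_one, abs_lt]; constructor <;> linarith [norm_nonneg z]
  have hgeom := (hasSum_geometric_of_lt_one (by positivity) hq).mul_left (2 * (‖z‖ / 2) ^ ν)
  exact (tsum_of_norm_bounded hgeom (norm_besselI_term_le hν z)).trans_eq (by ring)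

lemma abs_le_abs_int_add {α : ℝ} (hα : |α| ≤ 1 / 2) (m : ℤ) : |α| ≤ |(m : ℝ) + α| := by
  rcases eq_or_ne m 0 with rfl | hm
  · simp
  · have hm1 : (1 : ℝ) ≤ |(m : ℝ)| := by exact_mod_cast Int.one_le_abs hm
    have hm : |(m : ℝ)| ≤ |(m : ℝ) + α| + |α| := by simpa using abs_sub ((m : ℝ) + α) α
    linarith

lemma natAbs_le_abs_int_add_sub_add_one {α : ℝ} (hα : |α| ≤ 1 / 2) (m : ℤ) :
    (m.natAbs : ℝ) ≤ |(m : ℝ) + α| - |α| + 1 := by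
  have hm : |(m : ℝ)| ≤ |(m : ℝ) + α| + |α| := by simpa using abs_sub ((m : ℝ) + α) α
  rw [Nat.cast_natAbs, Int.cast_abs]
  linarith

lemma rpow_abs_int_add_mul_le {q ρ α : ℝ} (hq : 0 < q) (hqρ : q ≤ ρ) (hρ : ρ ≤ 1)
    (hα : |α| ≤ 1 / 2) (m : ℤ) : q ^ |(m : ℝ) + α| * ρ ≤ q ^ |α| * ρ ^ m.natAbs := by
  have hρ0 : 0 < ρ := hq.trans_le hqρ
  have hgap : 0 ≤ |(m : ℝ) + α| - |α| := sub_nonneg.2 (abs_le_abs_int_add hα m)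
  calc q ^ |(m : ℝ) + α| * ρ = q ^ |α| * (q ^ (|(m : ℝ) + α| - |α|) * ρ) := by
        rw [← mul_assoc, ← rpow_add hq]; ring_nf
    _ ≤ q ^ |α| * (ρ ^ (|(m : ℝ) + α| - |α|) * ρ) := by
        gcongr
    _ = q ^ |α| * ρ ^ (|(m : ℝ) + α| - |α| + 1) := by rw [rpow_add_one hρ0.ne']
    _ ≤ q ^ |α| * ρ ^ (m.natAbs : ℝ) := by
        gcongr q ^ |α| * ?_
        exact rpow_le_rpow_of_exponent_ge hρ0 hρ (natAbs_le_abs_int_add_sub_add_one hα m)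
    _ = q ^ |α| * ρ ^ m.natAbs := by rw [rpow_natCast]

lemma summable_pow_natAbs {ρ : ℝ} (hρ0 : 0 ≤ ρ) (hρ1 : ρ < 1) :
    Summable fun m : ℤ => ρ ^ m.natAbs :=
  Summable.of_nat_of_neg (by simpa using summable_geometric_of_lt_one hρ0 hρ1)
    (by simpa using summable_geometric_of_lt_one hρ0 hρ1)

lemma norm_tsum_besselI_abs_int_add_mul_le {α : ℝ} (hα : |α| ≤ 1 / 2) {z : ℂ} (hz0 : z ≠ 0)
    (hz : ‖z‖ ≤ 1) (w : ℤ → ℂ) (hw : ∀ m, ‖w m‖ ≤ 1) :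
    ‖∑' m : ℤ, besselI |(m : ℝ) + α| z * w m‖ ≤
      16 / 3 * (∑' m : ℤ, (1 / 2 : ℝ) ^ m.natAbs) * (‖z‖ / 2) ^ |α| := by
  set q := ‖z‖ / 2 with hq_def
  have hq0 : 0 < q := by positivity
  have hq : q ≤ 1 / 2 := by linarith
  have hterm : ∀ m : ℤ, ‖besselI |(m : ℝ) + α| z * w m‖ ≤
      16 / 3 * q ^ |α| * (1 / 2 : ℝ) ^ m.natAbs := fun m => by
    have hI : ‖besselI |(m : ℝ) + α| z‖ ≤ 8 / 3 * q ^ |(m : ℝ) + α| := by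
      have h := norm_besselI_le (abs_nonneg ((m : ℝ) + α)) (hz.trans_lt one_lt_two)
      rw [← hq_def] at h
      refine h.trans ?_
      rw [div_le_iff₀ (by nlinarith)]
      have hq2 : q ^ 2 ≤ 1 / 4 := by nlinarith
      nlinarith [mul_nonneg (rpow_nonneg hq0.le |(m : ℝ) + α|) (sub_nonneg.2 hq2)]
    calc ‖besselI |(m : ℝ) + α| z * w m‖ ≤ ‖besselI |(m : ℝ) + α| z‖ := by
          rw [norm_mul]; exact mul_le_of_le_one_right (norm_nonneg _) (hw m)
      _ ≤ 8 / 3 * q ^ |(m : ℝ) + α| := hI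
      _ ≤ 16 / 3 * q ^ |α| * (1 / 2 : ℝ) ^ m.natAbs := by
          linarith [rpow_abs_int_add_mul_le hq0 hq (by norm_num) hα m]
  have hsum := (summable_pow_natAbs (by norm_num) (by norm_num : (1 / 2 : ℝ) < 1)).hasSum.mul_left
    (16 / 3 * q ^ |α|)
  exact (tsum_of_norm_bounded hsum hterm).trans_eq (by ring)

theorem stmt_14_general (α : ℝ) (hα' : |α| ≤ 1/2) :
    ∃ C₁ C₂ : ℝ, 0 < C₁ ∧ 0 < C₂ ∧
      ∀ r r' θ θ' t : ℝ, 0 < r → 0 < r' → 0 < t → r * r' ≤ t →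
        ‖((1 / (4 * (π : ℂ) * (t : ℂ))) *
            ∑' m : ℤ,
              besselI |(m : ℝ) + α| ((r * r' : ℂ) / (2 * Complex.I * (t : ℂ))) *
                Complex.exp (Complex.I * (m : ℂ) * ((θ : ℂ) - (θ' : ℂ))))‖ ≤
          C₂ * t⁻¹ * (r * r' / t) ^ |α| := by
  set S := ∑' m : ℤ, (1 / 2 : ℝ) ^ m.natAbs
  have hS : 0 < S := (summable_pow_natAbs (by norm_num) (by norm_num)).tsum_pos
    (fun _ => by positivity) 0 (by norm_num)
  refine ⟨1, 16 / 3 * S / (4 * π), one_pos, by positivity, ?_⟩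
  intro r r' θ θ' t hr hr' ht hrt
  set z : ℂ := (r * r' : ℂ) / (2 * Complex.I * (t : ℂ))
  have hz : ‖z‖ = r * r' / (2 * t) := by
    simp [z, abs_of_pos hr, abs_of_pos hr', abs_of_pos ht]
  have hz0 : z ≠ 0 := by
    simp [z, hr.ne', hr'.ne', ht.ne']
  have hzle : ‖z‖ ≤ 1 := by
    rw [hz, div_le_one (by positivity)]; linarith
  have hw : ∀ m : ℤ, ‖Complex.exp (Complex.I * (m : ℂ) * ((θ : ℂ) - (θ' : ℂ)))‖ ≤ 1 := fun m => by
    simp [Complex.norm_exp]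
  have hbound := norm_tsum_besselI_abs_int_add_mul_le hα' hz0 hzle _ hw
  have hq : (‖z‖ / 2) ^ |α| ≤ (r * r' / t) ^ |α| := by
    refine rpow_le_rpow (by positivity) ?_ (abs_nonneg α)
    rw [hz, div_div, div_le_div_iff_of_pos_left (by positivity) (by positivity) (by positivity)]
    linarith
  rw [norm_mul, show ‖1 / (4 * (π : ℂ) * (t : ℂ))‖ = 1 / (4 * π * t) by
    simp [abs_of_pos pi_pos, abs_of_pos ht]]
  calc _ ≤ 1 / (4 * π * t) * (16 / 3 * S * (‖z‖ / 2) ^ |α|) := by gcongr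
    _ ≤ 1 / (4 * π * t) * (16 / 3 * S * (r * r' / t) ^ |α|) := by gcongr
    _ = _ := by field_simp

theorem stmt_14 (α : ℝ) (hα : 0 < |α|) (hα' : |α| ≤ 1/2) :
    ∃ C₁ C₂ : ℝ, 0 < C₁ ∧ 0 < C₂ ∧
      ∀ r r' θ θ' t : ℝ, 0 < r → 0 < r' → 0 < t → r * r' ≤ t →
        ‖((1 / (4 * (π : ℂ) * (t : ℂ))) *
            ∑' m : ℤ,
              besselI |(m : ℝ) + α| ((r * r' : ℂ) / (2 * Complex.I * (t : ℂ))) *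
                Complex.exp (Complex.I * (m : ℂ) * ((θ : ℂ) - (θ' : ℂ))))‖ ≤
          C₂ * t⁻¹ * (r * r' / t) ^ |α| :=
  stmt_14_general α hα'
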